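/- arXiv:1001.0950 — 3 statements merged into one kernel-verified Lean document; each statement's English description precedes it below -/
import Mathlib

section
/- In a lattice effect algebra E, every central element z is compatible with every element x of E, i.e., x ∨ z = x ⊕ (z ⊖ (x ∧ z)). -/
/-!
Write `z'` for the complement of `z`. Centrality at `x = 1` gives `z ∨ z' = 1`, and since in a
lattice effect algebra `a ⊕ b = (a ∨ b) ⊕ (a ∧ b)`, also `z ∧ z' = 0`. Hence `x ∧ z` and `x ∧ z'`
are disjoint summands of `x`, and `x ∧ z'` and `z` are disjoint summands of `x ∨ z`; for disjoint
summands `⊕` is `∨`. With `d = z ⊖ (x ∧ z)`, associativity gives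
`x ⊕ d = (x ∧ z') ⊕ ((x ∧ z) ⊕ d) = (x ∧ z') ⊕ z = x ∨ z`.
-/

structure EffectAlgebra (α : Type*) where
  oplus : α → α → Option α
  zero : α
  one : α
  zero_ne_one : zero ≠ one
  comm : ∀ x y, oplus x y = oplus y x
  assoc : ∀ x y z, (oplus x y).bind (fun w => oplus w z) = (oplus y z).bind (fun w => oplus x w)
  compl : α → α
  oplus_compl : ∀ x, oplus x (compl x) = some one
  compl_unique : ∀ x y, oplus x y = some one → y = compl x
  one_max : ∀ x, (oplus one x).isSome → x = zero

/-- The order induced by the partial operation: `x ≤ y` iff `∃ z, x ⊕ z = y`. -/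
def EffectAlgebra.le {α : Type*} (E : EffectAlgebra α) (x y : α) : Prop :=
  ∃ z, E.oplus x z = some y

/-- A lattice effect algebra: the lattice order coincides with the induced effect-algebra order. -/
structure LatticeEffectAlgebra (α : Type*) [Lattice α] extends EffectAlgebra α where
  le_iff : ∀ x y : α, x ≤ y ↔ ∃ z, oplus x z = some y

variable {α : Type*}

/-- A sharp element: `w ∧ w' = 0`. -/
def EffectAlgebra.Sharp [Lattice α] (E : EffectAlgebra α) (w : α) : Prop :=
  w ⊓ E.compl w = E.zero

/-- A central element: `x = (x ∧ z) ∨ (x ∧ z')` for all `x`. -/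
def EffectAlgebra.Central [Lattice α] (E : EffectAlgebra α) (z : α) : Prop :=
  ∀ x, x = (x ⊓ z) ⊔ (x ⊓ E.compl z)

/-- Compatibility: `x ↔ y` iff `x ∨ y = x ⊕ (y ⊖ (x ∧ y))`, expressed via the
(unique) difference `d = y ⊖ (x ∧ y)`, i.e. `(x ∧ y) ⊕ d = y` and `x ⊕ d = x ∨ y`. -/
def EffectAlgebra.Compatible [Lattice α] (E : EffectAlgebra α) (x y : α) : Prop :=
  ∃ d, E.oplus (x ⊓ y) d = some y ∧ E.oplus x d = some (x ⊔ y)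

namespace LatticeEffectAlgebra

variable [Lattice α] (E : LatticeEffectAlgebra α)

lemma oplus_oplus_eq_some {a b c s t : α} (hab : E.oplus a b = some s)
    (hsc : E.oplus s c = some t) : ∃ u, E.oplus b c = some u ∧ E.oplus a u = some t := by
  have h := E.assoc a b c
  rw [hab, Option.bind_some, hsc] at h
  exact Option.bind_eq_some_iff.1 h.symm

lemma oplus_oplus_eq_some' {a b c u t : α} (hbc : E.oplus b c = some u)
    (hau : E.oplus a u = some t) : ∃ s, E.oplus a b = some s ∧ E.oplus s c = some t := by
  have h := E.assoc a b c
  rw [hbc, Option.bind_some, hau] at h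
  exact Option.bind_eq_some_iff.1 h

lemma compl_oplus {a : α} : E.oplus (E.compl a) a = some E.one := by
  rw [E.comm]
  exact E.oplus_compl a

lemma compl_compl (a : α) : E.compl (E.compl a) = a :=
  (E.compl_unique _ _ E.compl_oplus).symm

/-- From `a ⊕ y = s` one computes `s' ⊕ a = y'`, which determines `y`. -/
lemma oplus_left_cancel {a b c s : α} (hb : E.oplus a b = some s) (hc : E.oplus a c = some s) :
    b = c := by
  have compl_eq : ∀ {y}, E.oplus a y = some s → E.oplus (E.compl s) a = some (E.compl y) := by
    intro y hy
    obtain ⟨u, hu, hau⟩ := E.oplus_oplus_eq_some hy (E.oplus_compl s)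
    rw [E.compl_unique a u hau] at hu
    obtain ⟨v, hv, hyv⟩ := E.oplus_oplus_eq_some hu E.compl_oplus
    rwa [E.compl_unique y v hyv] at hv
  have h := (compl_eq hb).symm.trans (compl_eq hc)
  rw [← E.compl_compl b, ← E.compl_compl c, Option.some.inj h]

lemma le_of_oplus_eq_some {a b s : α} (h : E.oplus a b = some s) : a ≤ s :=
  (E.le_iff a s).2 ⟨b, h⟩

lemma le_of_oplus_eq_some' {a b s : α} (h : E.oplus a b = some s) : b ≤ s :=
  E.le_of_oplus_eq_some (by rwa [E.comm])

lemma le_one (a : α) : a ≤ E.one :=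
  E.le_of_oplus_eq_some (E.oplus_compl a)

lemma compl_one : E.compl E.one = E.zero :=
  E.one_max _ (by rw [E.oplus_compl]; rfl)

lemma oplus_zero (a : α) : E.oplus a E.zero = some a := by
  have one_zero : E.oplus E.one E.zero = some E.one := by
    simpa only [E.compl_one] using E.oplus_compl E.one
  obtain ⟨u, hu, hau⟩ := E.oplus_oplus_eq_some (E.oplus_compl (E.compl a)) one_zero
  rwa [E.compl_unique _ u hau, E.compl_compl] at hu

lemma zero_le (a : α) : E.zero ≤ a :=
  E.le_of_oplus_eq_some' (E.oplus_zero a)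

lemma eq_zero_of_le_of_sharp {a z : α} (hz : E.Sharp z) (ha : a ≤ z)
    (ha' : a ≤ E.compl z) : a = E.zero :=
  le_antisymm (hz ▸ le_inf ha ha') (E.zero_le a)

lemma le_of_oplus_eq_some_of_le {a b da db s : α} (hab : a ≤ b) (ha : E.oplus a da = some s)
    (hb : E.oplus b db = some s) : db ≤ da := by
  obtain ⟨c, hc⟩ := (E.le_iff a b).1 hab
  obtain ⟨t, hcdb, hat⟩ := E.oplus_oplus_eq_some hc hb
  rw [E.oplus_left_cancel hat ha] at hcdb
  exact E.le_of_oplus_eq_some' hcdb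

/-- `s ⊖ (a ∨ b) = a ∧ b`, because `s ⊖ ·` is an antitone involution below `s`. -/
lemma sup_oplus_inf {a b s : α} (h : E.oplus a b = some s) :
    E.oplus (a ⊔ b) (a ⊓ b) = some s := by
  have hba : E.oplus b a = some s := by rwa [E.comm]
  obtain ⟨d, hd⟩ := (E.le_iff (a ⊔ b) s).1
    (sup_le (E.le_of_oplus_eq_some h) (E.le_of_oplus_eq_some hba))
  obtain ⟨u, hu⟩ := (E.le_iff (a ⊓ b) s).1 (inf_le_left.trans (E.le_of_oplus_eq_some h))
  have hus : E.oplus u (a ⊓ b) = some s := by rwa [E.comm]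
  have d_le : d ≤ a ⊓ b := le_inf (E.le_of_oplus_eq_some_of_le le_sup_right hba hd)
    (E.le_of_oplus_eq_some_of_le le_sup_left h hd)
  have sup_le_u : a ⊔ b ≤ u := sup_le (E.le_of_oplus_eq_some_of_le inf_le_right hu hba)
    (E.le_of_oplus_eq_some_of_le inf_le_left hu h)
  have le_d : a ⊓ b ≤ d := E.le_of_oplus_eq_some_of_le sup_le_u hd hus
  rwa [← le_antisymm d_le le_d]

lemma oplus_eq_sup_of_inf_eq_zero {a b s : α} (h : E.oplus a b = some s)
    (hab : a ⊓ b = E.zero) : s = a ⊔ b := by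
  have h' := E.sup_oplus_inf h
  rw [hab, E.oplus_zero] at h'
  exact (Option.some.inj h').symm

lemma exists_oplus_of_le {a c t s : α} (hct : c ≤ t) (h : E.oplus a t = some s) :
    ∃ u, E.oplus a c = some u := by
  obtain ⟨w, hw⟩ := (E.le_iff c t).1 hct
  obtain ⟨u, hu, -⟩ := E.oplus_oplus_eq_some' hw h
  exact ⟨u, hu⟩

lemma sup_compl_eq_one_of_central {z : α} (hz : E.Central z) : z ⊔ E.compl z = E.one := by
  simpa only [inf_eq_right.2 (E.le_one _)] using (hz E.one).symm

lemma sharp_of_central {z : α} (hz : E.Central z) : E.Sharp z := by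
  have h := E.sup_oplus_inf (E.oplus_compl z)
  rw [E.sup_compl_eq_one_of_central hz] at h
  exact E.one_max _ (by rw [h]; rfl)

lemma inf_compl_sup_eq_sup_of_central {z : α} (hz : E.Central z) (x : α) :
    x ⊓ E.compl z ⊔ z = x ⊔ z :=
  le_antisymm (sup_le (inf_le_left.trans le_sup_left) le_sup_right)
    (sup_le ((hz x).le.trans (sup_le (inf_le_right.trans le_sup_right) le_sup_left)) le_sup_right)

end LatticeEffectAlgebra

/-- every central element `z` is compatible with every element `x`,
i.e. `x ∨ z = x ⊕ (z ⊖ (x ∧ z))`. -/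
theorem central_compatible_with_all {α : Type*} [Lattice α]
    (E : LatticeEffectAlgebra α) (z : α) (hz : E.Central z) :
    ∀ x : α, E.Compatible x z := by
  intro x
  have hsharp := E.sharp_of_central hz
  obtain ⟨d, hd⟩ := (E.le_iff (x ⊓ z) z).1 inf_le_right
  obtain ⟨t, ht⟩ := E.exists_oplus_of_le (inf_le_right (a := x)) (E.oplus_compl z)
  rw [E.comm] at ht
  have ht_eq : t = x ⊔ z := by
    rw [E.oplus_eq_sup_of_inf_eq_zero ht (E.eq_zero_of_le_of_sharp hsharp inf_le_right
      (inf_le_left.trans inf_le_right)), E.inf_compl_sup_eq_sup_of_central hz]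
  obtain ⟨s, hs, hsd⟩ := E.oplus_oplus_eq_some' hd (ht_eq ▸ ht)
  have hs_eq : s = x := by
    rw [E.oplus_eq_sup_of_inf_eq_zero hs (E.eq_zero_of_le_of_sharp hsharp
      (inf_le_right.trans inf_le_right) (inf_le_left.trans inf_le_right)), sup_comm, ← hz x]
  exact ⟨d, hd, hs_eq ▸ hsd⟩
end

section
/- A state ω on a lattice effect algebra E is subadditive (ω(x ∨ y) ≤ ω(x) + ω(y) for all x, y) if and only if ω is a valuation, i.e., x ∧ y = 0 implies ω(x ∨ y) = ω(x) + ω(y). -/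
variable {α : Type*}

namespace EAProof

variable (A : EffectAlgebra α)

lemma compl_compl (x : α) : A.compl (A.compl x) = x :=
  (A.compl_unique _ _ (by rw [A.comm]; exact A.oplus_compl x)).symm

lemma one_compl : A.compl A.one = A.zero :=
  A.one_max _ (by rw [A.oplus_compl]; exact rfl)

lemma oplus_one_zero : A.oplus A.one A.zero = some A.one := by
  rw [← one_compl A]; exact A.oplus_compl A.one

lemma oplus_zero (x : α) : A.oplus x A.zero = some x := by
  have key : ∀ y, A.oplus (A.compl y) A.zero = some (A.compl y) := by
    intro y
    have h := A.assoc y (A.compl y) A.zero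
    rw [A.oplus_compl y] at h
    simp only [Option.bind_some] at h
    rw [oplus_one_zero A] at h
    cases hq : A.oplus (A.compl y) A.zero with
    | none => rw [hq] at h; simp at h
    | some w =>
      rw [hq] at h
      simp only [Option.bind_some] at h
      have hw : w = A.compl y := A.compl_unique y w h.symm
      rw [hw]
  calc A.oplus x A.zero = A.oplus (A.compl (A.compl x)) A.zero := by rw [compl_compl]
    _ = some (A.compl (A.compl x)) := key _
    _ = some x := by rw [compl_compl]

lemma sub {a b c : α} (h : A.oplus a b = some c) :
    A.oplus b (A.compl c) = some (A.compl a) := by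
  have hassoc := A.assoc a b (A.compl c)
  rw [h] at hassoc
  simp only [Option.bind_some] at hassoc
  rw [A.oplus_compl c] at hassoc
  cases hq : A.oplus b (A.compl c) with
  | none => rw [hq] at hassoc; simp at hassoc
  | some w =>
    rw [hq] at hassoc
    simp only [Option.bind_some] at hassoc
    have hw : w = A.compl a := A.compl_unique a w hassoc.symm
    rw [hw]

lemma cancel {x y z w : α} (h1 : A.oplus x y = some w) (h2 : A.oplus x z = some w) :
    y = z := by
  have s1 := sub A h1
  have s2 := sub A h2
  have t1 := sub A s1
  have t2 := sub A s2
  rw [compl_compl] at t1 t2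
  have h3 : A.compl y = A.compl z := by
    rw [t1] at t2; exact Option.some.inj t2
  calc y = A.compl (A.compl y) := (compl_compl A y).symm
    _ = A.compl (A.compl z) := by rw [h3]
    _ = z := compl_compl A z

lemma assoc' {x y p z a : α} (h1 : A.oplus x y = some p) (h2 : A.oplus p z = some a) :
    ∃ q, A.oplus y z = some q ∧ A.oplus x q = some a := by
  have h := A.assoc x y z
  rw [h1] at h
  simp only [Option.bind_some] at h
  rw [h2] at h
  cases hq : A.oplus y z with
  | none => rw [hq] at h; simp at h
  | some q =>
    rw [hq] at h
    simp only [Option.bind_some] at h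
    exact ⟨q, rfl, h.symm⟩

lemma eq_zero {t s : α} (h : A.oplus t s = some A.zero) : t = A.zero := by
  have h1 : A.oplus A.zero A.one = some A.one := by
    rw [A.comm]; exact oplus_one_zero A
  obtain ⟨q, hq1, hq2⟩ := assoc' A h h1
  have hs : s = A.zero := A.one_max s (by rw [A.comm, hq1]; exact rfl)
  rw [hs, oplus_zero] at h
  exact Option.some.inj h

end EAProof

/-- a state on a lattice effect algebra is subadditive iff it is a
valuation (`x ∧ y = 0` implies `ω(x ∨ y) = ω(x) + ω(y)`). -/
theorem subadditive_iff_valuation {α : Type*} [Lattice α]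
    (E : LatticeEffectAlgebra α)
    (ω : α → ℝ) (hrange : ∀ x, 0 ≤ ω x ∧ ω x ≤ 1) (hone : ω E.one = 1)
    (hadd : ∀ x y z : α, E.oplus x y = some z → ω z = ω x + ω y) :
    (∀ x y : α, ω (x ⊔ y) ≤ ω x + ω y) ↔
      (∀ x y : α, x ⊓ y = E.zero → ω (x ⊔ y) = ω x + ω y) := by
  set A := E.toEffectAlgebra with hA
  have hle : ∀ x y : α, x ≤ y ↔ ∃ z, A.oplus x z = some y := E.le_iff
  have hmono : ∀ p q : α, p ≤ q → ω p ≤ ω q := by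
    intro p q hpq
    obtain ⟨z, hz⟩ := (hle p q).1 hpq
    have := hadd _ _ _ hz
    have := (hrange z).1
    linarith
  constructor
  · -- subadditive → valuation
    intro hsub x y hxy
    set a := x ⊔ y with ha
    obtain ⟨u, hu⟩ := (hle x a).1 le_sup_left
    obtain ⟨v, hv⟩ := (hle y a).1 le_sup_right
    have hωu : ω a = ω x + ω u := hadd _ _ _ hu
    have hωv : ω a = ω y + ω v := hadd _ _ _ hv
    have hua : u ≤ a := (hle u a).2 ⟨x, by rw [A.comm]; exact hu⟩
    have hva : v ≤ a := (hle v a).2 ⟨y, by rw [A.comm]; exact hv⟩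
    have hwle : u ⊔ v ≤ a := sup_le hua hva
    obtain ⟨t, ht⟩ := (hle (u ⊔ v) a).1 hwle
    -- t ≤ x
    have htx : t ≤ x := by
      obtain ⟨s, hs⟩ := (hle u (u ⊔ v)).1 le_sup_left
      obtain ⟨r, hr1, hr2⟩ := EAProof.assoc' A hs ht
      have hux : A.oplus u x = some a := by rw [A.comm]; exact hu
      have hrx : r = x := EAProof.cancel A hr2 hux
      exact (hle t x).2 ⟨s, by rw [A.comm, ← hrx]; exact hr1⟩
    have hty : t ≤ y := by
      obtain ⟨s, hs⟩ := (hle v (u ⊔ v)).1 le_sup_right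
      obtain ⟨r, hr1, hr2⟩ := EAProof.assoc' A hs ht
      have hvy : A.oplus v y = some a := by rw [A.comm]; exact hv
      have hry : r = y := EAProof.cancel A hr2 hvy
      exact (hle t y).2 ⟨s, by rw [A.comm, ← hry]; exact hr1⟩
    have ht0 : t = A.zero := by
      have : t ≤ E.zero := hxy ▸ le_inf htx hty
      obtain ⟨s0, hs0⟩ := (hle t E.zero).1 this
      exact EAProof.eq_zero A hs0
    have huv : u ⊔ v = a := by
      rw [ht0, EAProof.oplus_zero] at ht
      exact Option.some.inj ht
    have h1 : ω a ≤ ω u + ω v := huv ▸ hsub u v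
    have h2 : ω a ≤ ω x + ω y := hsub x y
    linarith
  · -- valuation → subadditive
    intro hval x y
    set a := x ⊔ y with ha
    obtain ⟨u, hu⟩ := (hle x a).1 le_sup_left
    obtain ⟨v, hv⟩ := (hle y a).1 le_sup_right
    have hωu : ω a = ω x + ω u := hadd _ _ _ hu
    have hωv : ω a = ω y + ω v := hadd _ _ _ hv
    have hua : u ≤ a := (hle u a).2 ⟨x, by rw [A.comm]; exact hu⟩
    have hva : v ≤ a := (hle v a).2 ⟨y, by rw [A.comm]; exact hv⟩
    -- u ⊓ v = 0
    have hdisj : u ⊓ v = E.zero := by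
      set t := u ⊓ v with htdef
      -- from t ≤ u, get q with t ⊕ q = a and x ≤ q
      have key : ∀ w z : α, A.oplus w z = some a → t ≤ w →
          ∃ q, A.oplus t q = some a ∧ z ≤ q := by
        intro w z hwz htw
        obtain ⟨s, hs⟩ := (hle t w).1 htw
        have hwz' : A.oplus w z = some a := hwz
        obtain ⟨q, hq1, hq2⟩ := EAProof.assoc' A hs hwz'
        exact ⟨q, hq2, (hle z q).2 ⟨s, by rw [A.comm]; exact hq1⟩⟩
      have hux : A.oplus u x = some a := by rw [A.comm]; exact hu
      have hvy : A.oplus v y = some a := by rw [A.comm]; exact hv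
      obtain ⟨q1, hq1a, hxq1⟩ := key u x hux inf_le_left
      obtain ⟨q2, hq2a, hyq2⟩ := key v y hvy inf_le_right
      have hq12 : q1 = q2 := EAProof.cancel A hq1a hq2a
      have hxq : x ≤ q1 := hxq1
      have hyq : y ≤ q1 := hq12 ▸ hyq2
      have haq : a ≤ q1 := sup_le hxq hyq
      have hqa : q1 ≤ a := (hle q1 a).2 ⟨t, by rw [A.comm]; exact hq1a⟩
      have hqeq : q1 = a := le_antisymm hqa haq
      rw [hqeq] at hq1a
      have h0a : A.oplus A.zero a = some a := by
        rw [A.comm]; exact EAProof.oplus_zero A a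
      have : t = A.zero := by
        have h1 : A.oplus a t = some a := by rw [A.comm]; exact hq1a
        have h2 : A.oplus a A.zero = some a := EAProof.oplus_zero A a
        exact EAProof.cancel A h1 h2
      exact this
    have hvaleq : ω (u ⊔ v) = ω u + ω v := hval u v hdisj
    have hle' : ω (u ⊔ v) ≤ ω a := hmono _ _ (sup_le hua hva)
    linarith
end

section
/- In an Archimedean atomic lattice effect algebra E in which every atom a of E lies below some atom p_a of the center C(E), the center is atomic and ⋁_E {p ∈ C(E) | p atom of C(E)} = 1. -/
variable {α : Type*}

/-- An atom: a minimal nonzero element. -/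
def EffectAlgebra.IsAtom' [Lattice α] (E : EffectAlgebra α) (a : α) : Prop :=
  a ≠ E.zero ∧ ∀ b, b ≤ a → b = E.zero ∨ b = a

/-- The `n`-fold sum `n • a` (as a partial element). -/
def EffectAlgebra.nsum (E : EffectAlgebra α) (a : α) : ℕ → Option α
  | 0 => some E.zero
  | n + 1 => (EffectAlgebra.nsum E a n).bind fun w => E.oplus w a

/-- Archimedean: every nonzero element has finite order. -/
def EffectAlgebra.IsArchimedean (E : EffectAlgebra α) : Prop :=
  ∀ a : α, a ≠ E.zero → ∃ n, EffectAlgebra.nsum E a n = none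

/-- Atomic: below every nonzero element there is an atom. -/
def EffectAlgebra.IsAtomic [Lattice α] (E : EffectAlgebra α) : Prop :=
  ∀ x, x ≠ E.zero → ∃ a, EffectAlgebra.IsAtom' E a ∧ a ≤ x

/-- An atom of the center `C(E)`: a minimal nonzero central element. -/
def EffectAlgebra.CenterAtom [Lattice α] (E : EffectAlgebra α) (p : α) : Prop :=
  EffectAlgebra.Central E p ∧ p ≠ E.zero ∧
    ∀ c, EffectAlgebra.Central E c → c ≤ p → c = E.zero ∨ c = p

section Aux
variable {α : Type*} [Lattice α] (E : LatticeEffectAlgebra α)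

lemma LEA.compl_one : E.compl E.one = E.zero := by
  apply E.one_max
  rw [E.oplus_compl]; exact rfl

lemma LEA.oplus_one_zero : E.oplus E.one E.zero = some E.one := by
  have := E.oplus_compl E.one
  rwa [LEA.compl_one] at this

lemma LEA.compl_oplus_zero (x : α) : E.oplus (E.compl x) E.zero = some (E.compl x) := by
  have ha := E.assoc x (E.compl x) E.zero
  rw [E.oplus_compl] at ha
  simp only [Option.bind_some] at ha
  rw [LEA.oplus_one_zero] at ha
  cases hx : E.oplus (E.compl x) E.zero with
  | none => rw [hx] at ha; simp at ha
  | some w =>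
    rw [hx] at ha
    simp only [Option.bind_some] at ha
    have hw : w = E.compl x := E.compl_unique x w ha.symm
    rw [hw]

lemma LEA.compl_compl (x : α) : E.compl (E.compl x) = x := by
  have := E.oplus_compl x
  rw [E.comm] at this
  exact (E.compl_unique (E.compl x) x this).symm

lemma LEA.oplus_zero (x : α) : E.oplus x E.zero = some x := by
  have := LEA.compl_oplus_zero E (E.compl x)
  rwa [LEA.compl_compl] at this

lemma LEA.zero_le (x : α) : E.zero ≤ x := by
  rw [E.le_iff]
  exact ⟨x, by rw [E.comm]; exact LEA.oplus_zero E x⟩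

lemma LEA.le_one (x : α) : x ≤ E.one := by
  rw [E.le_iff]; exact ⟨E.compl x, E.oplus_compl x⟩

lemma LEA.compl_antitone {x y : α} (hxy : x ≤ y) : E.compl y ≤ E.compl x := by
  rw [E.le_iff] at hxy ⊢
  obtain ⟨t, ht⟩ := hxy
  have ha := E.assoc x t (E.compl y)
  rw [ht] at ha
  simp only [Option.bind_some] at ha
  rw [E.oplus_compl] at ha
  cases htc : E.oplus t (E.compl y) with
  | none => rw [htc] at ha; simp at ha
  | some w =>
    rw [htc] at ha
    simp only [Option.bind_some] at ha
    have hw : w = E.compl x := E.compl_unique x w ha.symm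
    exact ⟨t, by rw [E.comm, htc, hw]⟩

lemma LEA.sharp_of_central {z : α} (hz : E.Central z) : z ⊓ E.compl z = E.zero := by
  have h1 : E.one = z ⊔ E.compl z := by
    have := hz E.one
    rwa [inf_eq_right.mpr (LEA.le_one E z), inf_eq_right.mpr (LEA.le_one E (E.compl z))] at this
  set w := z ⊓ E.compl z with hw
  have h2 : z ≤ E.compl w := by
    have : w ≤ E.compl z := inf_le_right
    have := LEA.compl_antitone E this
    rwa [LEA.compl_compl] at this
  have h3 : E.compl z ≤ E.compl w := by
    have : w ≤ z := inf_le_left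
    exact LEA.compl_antitone E this
  have h4 : E.one ≤ E.compl w := by rw [h1]; exact sup_le h2 h3
  have h5 : E.compl w = E.one := le_antisymm (LEA.le_one E _) h4
  have := LEA.compl_compl E w
  rw [h5, LEA.compl_one] at this
  exact this.symm

lemma LEA.central_inf {p z : α} (hp : E.Central p) (hz : E.Central z) :
    E.Central (p ⊓ z) := by
  intro x
  have hx := hp x
  have h1 := hz (x ⊓ p)
  have h2 := hz (x ⊓ E.compl p)
  have hc1 : p ⊓ E.compl z ≤ E.compl (p ⊓ z) := by
    calc p ⊓ E.compl z ≤ E.compl z := inf_le_right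
    _ ≤ E.compl (p ⊓ z) := LEA.compl_antitone E inf_le_right
  have hc2 : E.compl p ≤ E.compl (p ⊓ z) := LEA.compl_antitone E inf_le_left
  have hB : (x ⊓ p ⊓ E.compl z) ⊔ ((x ⊓ E.compl p ⊓ z) ⊔ (x ⊓ E.compl p ⊓ E.compl z))
      ≤ x ⊓ E.compl (p ⊓ z) := by
    apply sup_le
    · exact le_inf (le_trans inf_le_left inf_le_left)
        (le_trans (by rw [inf_assoc]; exact inf_le_right) hc1)
    · apply sup_le
      · exact le_inf (le_trans inf_le_left inf_le_left)
          (le_trans (le_trans inf_le_left inf_le_right) hc2)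
      · exact le_inf (le_trans inf_le_left inf_le_left)
          (le_trans (le_trans inf_le_left inf_le_right) hc2)
  apply le_antisymm
  · calc x = (x ⊓ p) ⊔ (x ⊓ E.compl p) := hx
      _ = ((x ⊓ p ⊓ z) ⊔ (x ⊓ p ⊓ E.compl z)) ⊔ ((x ⊓ E.compl p ⊓ z) ⊔ (x ⊓ E.compl p ⊓ E.compl z)) := by
          rw [← h1, ← h2]
      _ = (x ⊓ p ⊓ z) ⊔ ((x ⊓ p ⊓ E.compl z) ⊔ ((x ⊓ E.compl p ⊓ z) ⊔ (x ⊓ E.compl p ⊓ E.compl z))) := by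
          rw [sup_assoc]
      _ ≤ (x ⊓ (p ⊓ z)) ⊔ (x ⊓ E.compl (p ⊓ z)) := by
          apply sup_le
          · exact le_sup_of_le_left (by rw [inf_assoc])
          · exact le_sup_of_le_right hB
  · exact sup_le inf_le_left inf_le_left

end Aux

/-- if in an Archimedean atomic lattice effect algebra every atom
lies below some atom of the center, then the center is atomic and the join (in
`E`) of all atoms of the center is `1`. -/
theorem center_atomic_of_atoms_below_central_atoms {α : Type*} [Lattice α]
    (E : LatticeEffectAlgebra α)
    (hArch : E.IsArchimedean) (hAtomic : E.IsAtomic)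
    (h : ∀ a : α, E.IsAtom' a → ∃ p, E.CenterAtom p ∧ a ≤ p) :
    (∀ z : α, E.Central z → z ≠ E.zero → ∃ p, E.CenterAtom p ∧ p ≤ z) ∧
    IsLUB {p : α | E.CenterAtom p} E.one := by
  constructor
  · intro z hz hz0
    obtain ⟨a, ha, haz⟩ := hAtomic z hz0
    obtain ⟨p, hp, hap⟩ := h a ha
    refine ⟨p, hp, ?_⟩
    have hpz : E.Central (p ⊓ z) := LEA.central_inf E hp.1 hz
    have := hp.2.2 (p ⊓ z) hpz inf_le_left
    rcases this with h0 | hpe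
    · exfalso
      have : a ≤ p ⊓ z := le_inf hap haz
      rw [h0] at this
      exact ha.1 (le_antisymm this (LEA.zero_le E a))
    · rw [← hpe]; exact inf_le_right
  · constructor
    · intro p _; exact LEA.le_one E p
    · intro u hu
      have hu1 : u = E.one := by
        by_contra hne
        have hcu : E.compl u ≠ E.zero := by
          intro h0
          have := E.oplus_compl u
          rw [h0, LEA.oplus_zero] at this
          exact hne (Option.some.inj this)
        obtain ⟨a, ha, hau⟩ := hAtomic (E.compl u) hcu
        obtain ⟨p, hp, hap⟩ := h a ha
        have hpu : p ≤ u := hu hp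
        have h1 : E.compl u ≤ E.compl p := LEA.compl_antitone E hpu
        have h2 : a ≤ p ⊓ E.compl p := le_inf hap (le_trans hau h1)
        rw [LEA.sharp_of_central E hp.1] at h2
        exact ha.1 (le_antisymm h2 (LEA.zero_le E a))
      rw [hu1]
end
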